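/- arXiv:2308.01625 — 6 statements merged into one kernel-verified Lean document; each statement's English description precedes it below -/
import Mathlib

section
/- Let E, I, K, I_ρ > 0 and l > 0 be real numbers, let ω be a real number, and let b : [0,l] → ℝ be continuous. Let u, v : [0,l] → ℂ be twice continuously differentiable functions with v(0) = v(l) = 0. If E·I·v''(x) + K·u'(x) − K·v(x) − i·b(x)·ω·v(x) = −I_ρ·ω²·v(x) for all x ∈ (0,l), then E·I·∫₀ˡ |v'(x)|² dx + K·∫₀ˡ u(x)·conj(v'(x)) dx + ∫₀ˡ (K − I_ρ·ω²)·|v(x)|² dx + i·ω·∫₀ˡ b(x)·|v(x)|² dx = 0 (as an identity of complex numbers). -/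
/-!
Multiply the equation by `conj v` and integrate over `[0, l]`. Integrating `v'' conj v` and
`u' conj v` by parts, the boundary terms vanish because `v(0) = v(l) = 0`, leaving
`-∫ |v'|²` and `-∫ u conj v'`; rearranging gives the identity.
-/

open MeasureTheory Set intervalIntegral ComplexConjugate Interval

section

variable {F : Type*} [NormedAddCommGroup F] [NormedSpace ℝ F] {f : ℝ → F} {a b : ℝ}

theorem derivWithin_Icc_eqOn_deriv : EqOn (derivWithin f (Icc a b)) (deriv f) (Ioo a b) :=
  fun _ hx ↦ derivWithin_of_mem_nhds (Icc_mem_nhds hx.1 hx.2)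

theorem derivWithin_derivWithin_Icc_eqOn_deriv_deriv :
    EqOn (derivWithin (derivWithin f (Icc a b)) (Icc a b)) (deriv (deriv f)) (Ioo a b) :=
  fun _ hx ↦ (derivWithin_Icc_eqOn_deriv hx).trans <|
    (derivWithin_Icc_eqOn_deriv.eventuallyEq_of_mem (Ioo_mem_nhds hx.1 hx.2)).deriv_eq

theorem ContDiffOn.hasDerivWithinAt_derivWithin_uIcc (hab : a ≤ b)
    (hf : ContDiffOn ℝ 1 f (Icc a b)) {x : ℝ} (hx : x ∈ [[a, b]]) :
    HasDerivWithinAt f (derivWithin f (Icc a b) x) [[a, b]] x := by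
  rw [uIcc_of_le hab] at hx ⊢
  exact (hf.differentiableOn one_ne_zero x hx).hasDerivWithinAt

end

theorem integral_derivWithin_mul_conj_eq_neg {f w : ℝ → ℂ} {a b : ℝ} (hab : a < b)
    (hf : ContDiffOn ℝ 1 f (Icc a b)) (hw : ContDiffOn ℝ 1 w (Icc a b))
    (ha : w a = 0) (hb : w b = 0) :
    ∫ x in a..b, derivWithin f (Icc a b) x * conj (w x)
      = -∫ x in a..b, f x * conj (derivWithin w (Icc a b) x) := by
  have hs := uniqueDiffOn_Icc hab
  have hf' := (hf.continuousOn_derivWithin hs le_rfl).intervalIntegrable_of_Icc (μ := volume) hab.le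
  have hw' := (Complex.continuous_conj.comp_continuousOn
    (hw.continuousOn_derivWithin hs le_rfl)).intervalIntegrable_of_Icc (μ := volume) hab.le
  have := integral_mul_deriv_eq_deriv_mul_of_hasDerivWithinAt
    (fun x hx ↦ hf.hasDerivWithinAt_derivWithin_uIcc hab.le hx)
    (fun x hx ↦ (hw.hasDerivWithinAt_derivWithin_uIcc hab.le hx).star) hf' hw'
  simp only [starRingEnd_apply] at this ⊢
  simp only [this, ha, hb, star_zero, mul_zero, sub_zero, zero_sub, neg_neg]

theorem energy_identity_of_dirichlet {a b : ℝ} (hab : a < b) (c₂ c₁ : ℂ) {q u v : ℝ → ℂ}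
    (hq : ContinuousOn q (Icc a b)) (hu : ContDiffOn ℝ 1 u (Icc a b))
    (hv : ContDiffOn ℝ 2 v (Icc a b)) (ha : v a = 0) (hb : v b = 0)
    (h : ∀ x ∈ Ioo a b, c₂ * deriv (deriv v) x + c₁ * deriv u x + q x * v x = 0) :
    c₂ * (∫ x in a..b, ((‖deriv v x‖ : ℂ)) ^ 2) + c₁ * (∫ x in a..b, u x * conj (deriv v x))
      = ∫ x in a..b, q x * (‖v x‖ : ℂ) ^ 2 := by
  -- `deriv` is junk at the endpoints, so the integrations by parts use the one-sided derivatives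
  -- `derivWithin _ (Icc a b)`, continuous on `Icc a b` and equal to `deriv` on `Ioo a b`.
  set v₁ := derivWithin v (Icc a b)
  set v₂ := derivWithin v₁ (Icc a b)
  set u₁ := derivWithin u (Icc a b)
  have hs := uniqueDiffOn_Icc hab
  have hv₁ : ContDiffOn ℝ 1 v₁ (Icc a b) := hv.derivWithin hs (by norm_num)
  have hv' : ContDiffOn ℝ 1 v (Icc a b) := hv.of_le (by norm_num)
  have hv₁_eq : EqOn v₁ (deriv v) (Ioo a b) := derivWithin_Icc_eqOn_deriv
  have ibp_v : ∫ x in a..b, v₂ x * conj (v x) = -∫ x in a..b, ((‖deriv v x‖ : ℂ)) ^ 2 := by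
    rw [integral_derivWithin_mul_conj_eq_neg hab hv₁ hv' ha hb]
    exact congrArg _ <| integral_congr_Ioo_of_le hab.le fun x hx ↦ by
      rw [Complex.mul_conj', ← hv₁_eq hx]
  have ibp_u : ∫ x in a..b, u₁ x * conj (v x) = -∫ x in a..b, u x * conj (deriv v x) := by
    rw [integral_derivWithin_mul_conj_eq_neg hab hu hv' ha hb]
    exact congrArg _ <| integral_congr_Ioo_of_le hab.le fun x hx ↦ by rw [← hv₁_eq hx]
  have weak : ∫ x in a..b, (c₂ * (v₂ x * conj (v x)) + c₁ * (u₁ x * conj (v x))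
      + q x * (‖v x‖ : ℂ) ^ 2) = 0 := by
    refine (integral_congr_Ioo_of_le hab.le fun x hx ↦ ?_).trans integral_zero
    have hx_eq := h x hx
    rw [← derivWithin_derivWithin_Icc_eqOn_deriv_deriv hx, ← derivWithin_Icc_eqOn_deriv hx] at hx_eq
    rw [← Complex.mul_conj']
    linear_combination conj (v x) * hx_eq
  have hint : ∀ g : ℝ → ℂ, ContinuousOn g (Icc a b) → IntervalIntegrable g volume a b :=
    fun g hg ↦ hg.intervalIntegrable_of_Icc hab.le
  have hvc := hv.continuousOn
  have hv₂c : ContinuousOn v₂ (Icc a b) := hv₁.continuousOn_derivWithin hs le_rfl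
  have hu₁c : ContinuousOn u₁ (Icc a b) := hu.continuousOn_derivWithin hs le_rfl
  rw [integral_add (.add (hint _ (by fun_prop)) (hint _ (by fun_prop))) (hint _ (by fun_prop)),
    integral_add (hint _ (by fun_prop)) (hint _ (by fun_prop)),
    intervalIntegral.integral_const_mul, intervalIntegral.integral_const_mul, ibp_v, ibp_u] at weak
  linear_combination -weak

theorem stmt_1_general (E I K Iρ l ω : ℝ)
    (hl : 0 < l)
    (b : ℝ → ℝ) (hb : ContinuousOn b (Set.Icc 0 l))
    (u v : ℝ → ℂ)
    (hu : ContDiffOn ℝ 2 u (Set.Icc 0 l))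
    (hv : ContDiffOn ℝ 2 v (Set.Icc 0 l))
    (hv0 : v 0 = 0) (hvl : v l = 0)
    (heq : ∀ x ∈ Set.Ioo (0 : ℝ) l,
      (E : ℂ) * (I : ℂ) * deriv (deriv v) x + (K : ℂ) * deriv u x - (K : ℂ) * v x
        - Complex.I * (b x : ℂ) * (ω : ℂ) * v x
        = -((Iρ : ℂ) * (ω : ℂ) ^ 2) * v x) :
    (E : ℂ) * (I : ℂ) * (∫ x in (0 : ℝ)..l, ((‖deriv v x‖ : ℂ)) ^ 2)
      + (K : ℂ) * (∫ x in (0 : ℝ)..l, u x * (starRingEnd ℂ) (deriv v x))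
      + (∫ x in (0 : ℝ)..l, ((K : ℂ) - (Iρ : ℂ) * (ω : ℂ) ^ 2) * ((‖v x‖ : ℂ)) ^ 2)
      + Complex.I * (ω : ℂ) * (∫ x in (0 : ℝ)..l, (b x : ℂ) * ((‖v x‖ : ℂ)) ^ 2) = 0 := by
  have hvc := hv.continuousOn
  have hint : ∀ g : ℝ → ℂ, ContinuousOn g (Icc 0 l) → IntervalIntegrable g volume 0 l :=
    fun g hg ↦ hg.intervalIntegrable_of_Icc hl.le
  have hlin : ∫ x in 0..l, -((K - Iρ * ω ^ 2 + Complex.I * ω * b x) * (‖v x‖ : ℂ) ^ 2)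
      = -((∫ x in 0..l, ((K : ℂ) - Iρ * ω ^ 2) * (‖v x‖ : ℂ) ^ 2)
        + Complex.I * ω * ∫ x in 0..l, (b x : ℂ) * (‖v x‖ : ℂ) ^ 2) := by
    rw [← intervalIntegral.integral_const_mul, ← integral_add (hint _ (by fun_prop))
      (hint _ (by fun_prop)), ← intervalIntegral.integral_neg]
    exact integral_congr fun x _ ↦ by ring
  have energy := energy_identity_of_dirichlet hl (E * I) K (q := fun x ↦
      -(K - Iρ * ω ^ 2 + Complex.I * ω * b x)) (by fun_prop) (hu.of_le (by norm_num)) hv hv0 hvl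
    fun x hx ↦ by linear_combination heq x hx
  simp only [neg_mul, hlin] at energy
  linear_combination energy

/-- Identity (R19): multiplying the second Timoshenko eigen-equation by `conj v`
and integrating by parts using the Dirichlet boundary conditions on `v`. -/
theorem stmt_1 (E I K Iρ l ω : ℝ)
    (hE : 0 < E) (hI : 0 < I) (hK : 0 < K) (hIρ : 0 < Iρ) (hl : 0 < l)
    (b : ℝ → ℝ) (hb : ContinuousOn b (Set.Icc 0 l))
    (u v : ℝ → ℂ)
    (hu : ContDiffOn ℝ 2 u (Set.Icc 0 l))
    (hv : ContDiffOn ℝ 2 v (Set.Icc 0 l))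
    (hv0 : v 0 = 0) (hvl : v l = 0)
    (heq : ∀ x ∈ Set.Ioo (0 : ℝ) l,
      (E : ℂ) * (I : ℂ) * deriv (deriv v) x + (K : ℂ) * deriv u x - (K : ℂ) * v x
        - Complex.I * (b x : ℂ) * (ω : ℂ) * v x
        = -((Iρ : ℂ) * (ω : ℂ) ^ 2) * v x) :
    (E : ℂ) * (I : ℂ) * (∫ x in (0 : ℝ)..l, ((‖deriv v x‖ : ℂ)) ^ 2)
      + (K : ℂ) * (∫ x in (0 : ℝ)..l, u x * (starRingEnd ℂ) (deriv v x))
      + (∫ x in (0 : ℝ)..l, ((K : ℂ) - (Iρ : ℂ) * (ω : ℂ) ^ 2) * ((‖v x‖ : ℂ)) ^ 2)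
      + Complex.I * (ω : ℂ) * (∫ x in (0 : ℝ)..l, (b x : ℂ) * ((‖v x‖ : ℂ)) ^ 2) = 0 :=
  stmt_1_general E I K Iρ l ω hl b hb u v hu hv hv0 hvl heq
end

section
/- Let ρ, K, I_ρ, E, I > 0 and l > 0 be real numbers, let ω be a nonzero real number, and let b : [0,l] → ℝ be a continuous nonnegative function for which there exist 0 ≤ b₀ < b₁ ≤ l and b̄ > 0 with b(x) ≥ b̄ for all x ∈ [b₀,b₁]. Let u, v : [0,l] → ℂ be twice continuously differentiable with u(0) = u(l) = v(0) = v(l) = 0, and suppose that on (0,l): K·u'' − K·v' = −ρ·ω²·u and E·I·v'' + K·u' − K·v − i·b·ω·v = −I_ρ·ω²·v. Then u(x) = 0 and v(x) = 0 for all x ∈ (b₀,b₁). -/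
/-!
Multiplying the two equations by `conj u` and `conj v` and taking imaginary parts shows that
the flux `ω · Im (K u' ū + E I v' v̄ + K u v̄)` has derivative `ω² b |v|² ≥ 0`; since the flux
vanishes at both ends of `[0, l]` it is constant, so `b |v|² ≡ 0` and `v` vanishes where the
damping is active. There the second equation reduces to `K u' = 0` and then the first one to
`ρ ω² u = 0`.
-/

open Set Filter Topology ComplexConjugate

lemma hasDerivAt_derivWithin_Icc {E : Type*} [NormedAddCommGroup E] [NormedSpace ℝ E]
    {f : ℝ → E} {a b x : ℝ} (hf : ContDiffOn ℝ 2 f (Icc a b)) (hx : x ∈ Ioo a b) :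
    HasDerivAt (derivWithin f (Icc a b)) (deriv (deriv f) x) x := by
  have hf' : ContDiffOn ℝ 1 (deriv f) (Ioo a b) :=
    (hf.mono Ioo_subset_Icc_self).deriv_of_isOpen isOpen_Ioo (by norm_num)
  have hderiv : derivWithin f (Icc a b) =ᶠ[𝓝 x] deriv f := by
    filter_upwards [isOpen_Ioo.mem_nhds hx] with y hy
    exact derivWithin_of_mem_nhds (Icc_mem_nhds hy.1 hy.2)
  exact (((hf'.differentiableOn one_ne_zero) x hx).differentiableAt
    (isOpen_Ioo.mem_nhds hx)).hasDerivAt.congr_of_eventuallyEq hderiv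

lemma eq_zero_of_hasDerivAt_nonneg_of_eq {G g : ℝ → ℝ} {a b : ℝ}
    (hG : ContinuousOn G (Icc a b)) (hG' : ∀ x ∈ Ioo a b, HasDerivAt G (g x) x)
    (hg : ∀ x ∈ Ioo a b, 0 ≤ g x) (hGab : G a = G b) : ∀ x ∈ Ioo a b, g x = 0 := by
  intro x hx
  have hmono : MonotoneOn G (Icc a b) :=
    monotoneOn_of_hasDerivWithinAt_nonneg (convex_Icc a b) hG
      (fun y hy => (hG' y (by rwa [interior_Icc] at hy)).hasDerivWithinAt)
      (fun y hy => hg y (by rwa [interior_Icc] at hy))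
  have hab : a ≤ b := (hx.1.trans hx.2).le
  have hconst : ∀ y ∈ Ioo a b, G y = G a := fun y hy =>
    le_antisymm (hGab ▸ hmono (Ioo_subset_Icc_self hy) (right_mem_Icc.2 hab) hy.2.le)
      (hmono (left_mem_Icc.2 hab) (Ioo_subset_Icc_self hy) hy.1.le)
  have hlocal : G =ᶠ[𝓝 x] fun _ => G a :=
    eventually_of_mem (isOpen_Ioo.mem_nhds hx) hconst
  exact (hG' x hx).unique ((hasDerivAt_const x (G a)).congr_of_eventuallyEq hlocal)

/-- `D = E I` is the bending stiffness; the factor `ω` makes the derivative `ω² b |v|²` of the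
flux nonnegative whatever the sign of `ω`. -/
def timoshenkoFlux (K D ω : ℝ) (u v u' v' : ℝ → ℂ) (x : ℝ) : ℝ :=
  ω * (K * (u' x * conj (u x)) + D * (v' x * conj (v x)) + K * (u x * conj (v x))).im

lemma timoshenkoFlux_continuousOn {K D ω : ℝ} {u v u' v' : ℝ → ℂ} {s : Set ℝ}
    (hu : ContinuousOn u s) (hv : ContinuousOn v s) (hu' : ContinuousOn u' s)
    (hv' : ContinuousOn v' s) : ContinuousOn (timoshenkoFlux K D ω u v u' v') s := by
  unfold timoshenkoFlux
  fun_prop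

lemma im_timoshenko_energy_eq {K D ρ Iρ ω β : ℝ} {U V U₁ V₁ U₂ V₂ : ℂ}
    (h₁ : (K : ℂ) * U₂ - K * V₁ = -((ρ : ℂ) * (ω : ℂ) ^ 2) * U)
    (h₂ : (D : ℂ) * V₂ + K * U₁ - K * V - Complex.I * β * ω * V
      = -((Iρ : ℂ) * (ω : ℂ) ^ 2) * V) :
    ω * (K * (U₂ * conj U + U₁ * conj U₁) + D * (V₂ * conj V + V₁ * conj V₁)
      + K * (U₁ * conj V + U * conj V₁)).im = ω ^ 2 * β * Complex.normSq V := by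
  rw [Complex.ext_iff] at h₁ h₂
  obtain ⟨h₁r, h₁i⟩ := h₁
  obtain ⟨h₂r, h₂i⟩ := h₂
  simp only [Complex.mul_re, Complex.mul_im, Complex.add_re, Complex.add_im,
    Complex.sub_re, Complex.sub_im, Complex.neg_re, Complex.neg_im,
    Complex.ofReal_re, Complex.ofReal_im, Complex.I_re, Complex.I_im,
    Complex.conj_re, Complex.conj_im, Complex.normSq_apply, pow_two] at h₁r h₁i h₂r h₂i ⊢
  linear_combination (norm := ring_nf)
    (ω * U.re) * h₁i - (ω * U.im) * h₁r + (ω * V.re) * h₂i - (ω * V.im) * h₂r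

lemma timoshenkoFlux_hasDerivAt {K D ρ Iρ ω β x : ℝ} {u v u' v' : ℝ → ℂ} {u₂ v₂ : ℂ}
    (hu : HasDerivAt u (u' x) x) (hv : HasDerivAt v (v' x) x)
    (hu' : HasDerivAt u' u₂ x) (hv' : HasDerivAt v' v₂ x)
    (h₁ : (K : ℂ) * u₂ - K * v' x = -((ρ : ℂ) * (ω : ℂ) ^ 2) * u x)
    (h₂ : (D : ℂ) * v₂ + K * u' x - K * v x - Complex.I * β * ω * v x
      = -((Iρ : ℂ) * (ω : ℂ) ^ 2) * v x) :
    HasDerivAt (timoshenkoFlux K D ω u v u' v') (ω ^ 2 * β * Complex.normSq (v x)) x := by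
  have hconj {f : ℝ → ℂ} {f' : ℂ} (hf : HasDerivAt f f' x) :
      HasDerivAt (fun y => conj (f y)) (conj f') x :=
    Complex.conjCLE.hasFDerivAt.comp_hasDerivAt x hf
  have hsum := (((hu'.mul (hconj hu)).const_mul (K : ℂ)).add
    ((hv'.mul (hconj hv)).const_mul (D : ℂ))).add ((hu.mul (hconj hv)).const_mul (K : ℂ))
  rw [← im_timoshenko_energy_eq h₁ h₂]
  exact (Complex.imCLM.hasFDerivAt.comp_hasDerivAt x hsum).const_mul ω

lemma timoshenko_eq_zero_of_damping_pos {K D ρ Iρ ω l : ℝ} {b : ℝ → ℝ} {u v : ℝ → ℂ}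
    (hω : ω ≠ 0) (hb : ∀ x ∈ Ioo 0 l, 0 ≤ b x)
    (hu : ContDiffOn ℝ 2 u (Icc 0 l)) (hv : ContDiffOn ℝ 2 v (Icc 0 l))
    (hu0 : u 0 = 0) (hul : u l = 0) (hv0 : v 0 = 0) (hvl : v l = 0)
    (heq1 : ∀ x ∈ Ioo 0 l,
      (K : ℂ) * deriv (deriv u) x - K * deriv v x = -((ρ : ℂ) * (ω : ℂ) ^ 2) * u x)
    (heq2 : ∀ x ∈ Ioo 0 l,
      (D : ℂ) * deriv (deriv v) x + K * deriv u x - K * v x - Complex.I * b x * ω * v x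
        = -((Iρ : ℂ) * (ω : ℂ) ^ 2) * v x) :
    ∀ x ∈ Ioo 0 l, 0 < b x → v x = 0 := by
  intro x hx hbx
  set F := timoshenkoFlux K D ω u v (derivWithin u (Icc 0 l)) (derivWithin v (Icc 0 l))
  have hF' : ∀ y ∈ Ioo 0 l, HasDerivAt F (ω ^ 2 * b y * Complex.normSq (v y)) y := by
    intro y hy
    have hs : Icc 0 l ∈ 𝓝 y := Icc_mem_nhds hy.1 hy.2
    have hu' : derivWithin u (Icc 0 l) y = deriv u y := derivWithin_of_mem_nhds hs
    have hv' : derivWithin v (Icc 0 l) y = deriv v y := derivWithin_of_mem_nhds hs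
    exact timoshenkoFlux_hasDerivAt
      ((hu.differentiableOn two_ne_zero y (Ioo_subset_Icc_self hy)).hasDerivWithinAt.hasDerivAt hs)
      ((hv.differentiableOn two_ne_zero y (Ioo_subset_Icc_self hy)).hasDerivWithinAt.hasDerivAt hs)
      (hasDerivAt_derivWithin_Icc hu hy) (hasDerivAt_derivWithin_Icc hv hy)
      (by rw [hv']; exact heq1 y hy) (by rw [hu']; exact heq2 y hy)
  have hunique : UniqueDiffOn ℝ (Icc 0 l) := uniqueDiffOn_Icc (hx.1.trans hx.2)
  have hF : ContinuousOn F (Icc 0 l) :=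
    timoshenkoFlux_continuousOn hu.continuousOn hv.continuousOn
      (hu.continuousOn_derivWithin hunique one_le_two)
      (hv.continuousOn_derivWithin hunique one_le_two)
  have hends : F 0 = F l := by simp [F, timoshenkoFlux, hu0, hul, hv0, hvl]
  have hzero := eq_zero_of_hasDerivAt_nonneg_of_eq hF hF'
    (fun y hy => mul_nonneg (mul_nonneg (sq_nonneg ω) (hb y hy)) (Complex.normSq_nonneg _))
    hends x hx
  simpa [hω, hbx.ne'] using hzero

lemma timoshenko_eqOn_zero_of_eqOn_zero {K D ρ Iρ ω : ℝ} {b : ℝ → ℝ} {u v : ℝ → ℂ}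
    {U : Set ℝ}
    (hU : IsOpen U) (hK : K ≠ 0) (hρ : ρ ≠ 0) (hω : ω ≠ 0) (hv : EqOn v 0 U)
    (heq1 : ∀ x ∈ U,
      (K : ℂ) * deriv (deriv u) x - K * deriv v x = -((ρ : ℂ) * (ω : ℂ) ^ 2) * u x)
    (heq2 : ∀ x ∈ U,
      (D : ℂ) * deriv (deriv v) x + K * deriv u x - K * v x - Complex.I * b x * ω * v x
        = -((Iρ : ℂ) * (ω : ℂ) ^ 2) * v x) :
    EqOn u 0 U := by
  have hv' : EqOn (deriv v) 0 U := by simpa using hv.deriv hU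
  have hv'' : EqOn (deriv (deriv v)) 0 U := by simpa using hv'.deriv hU
  have hu' : EqOn (deriv u) 0 U := fun x hx => by
    simpa [hv hx, hv'' hx, hK] using heq2 x hx
  have hu'' : EqOn (deriv (deriv u)) 0 U := by simpa using hu'.deriv hU
  intro x hx
  simpa [hu'' hx, hv' hx, hρ, hω] using (heq1 x hx).symm

theorem stmt_3_general (ρ K Iρ E I l ω : ℝ)
    (hρ : 0 < ρ) (hK : 0 < K)
    (hω : ω ≠ 0)
    (b : ℝ → ℝ)
    (hbnonneg : ∀ x ∈ Set.Icc (0 : ℝ) l, 0 ≤ b x)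
    (b₀ b₁ bbar : ℝ) (hb₀ : 0 ≤ b₀) (hb₁ : b₁ ≤ l) (hbbar : 0 < bbar)
    (hblower : ∀ x ∈ Set.Icc b₀ b₁, bbar ≤ b x)
    (u v : ℝ → ℂ)
    (hu : ContDiffOn ℝ 2 u (Set.Icc 0 l))
    (hv : ContDiffOn ℝ 2 v (Set.Icc 0 l))
    (hu0 : u 0 = 0) (hul : u l = 0) (hv0 : v 0 = 0) (hvl : v l = 0)
    (heq1 : ∀ x ∈ Set.Ioo (0 : ℝ) l,
      (K : ℂ) * deriv (deriv u) x - (K : ℂ) * deriv v x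
        = -((ρ : ℂ) * (ω : ℂ) ^ 2) * u x)
    (heq2 : ∀ x ∈ Set.Ioo (0 : ℝ) l,
      (E : ℂ) * (I : ℂ) * deriv (deriv v) x + (K : ℂ) * deriv u x - (K : ℂ) * v x
        - Complex.I * (b x : ℂ) * (ω : ℂ) * v x
        = -((Iρ : ℂ) * (ω : ℂ) ^ 2) * v x) :
    ∀ x ∈ Set.Ioo b₀ b₁, u x = 0 ∧ v x = 0 := by
  have hsub : Ioo b₀ b₁ ⊆ Ioo 0 l := Ioo_subset_Ioo hb₀ hb₁
  have heq2' : ∀ x ∈ Ioo 0 l, ((E * I : ℝ) : ℂ) * deriv (deriv v) x + K * deriv u x - K * v x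
      - Complex.I * b x * ω * v x = -((Iρ : ℂ) * (ω : ℂ) ^ 2) * v x := by
    simpa only [Complex.ofReal_mul] using heq2
  have hvzero : EqOn v 0 (Ioo b₀ b₁) := fun x hx =>
    timoshenko_eq_zero_of_damping_pos hω (fun y hy => hbnonneg y (Ioo_subset_Icc_self hy))
      hu hv hu0 hul hv0 hvl heq1 heq2' x (hsub hx)
      (hbbar.trans_le (hblower x (Ioo_subset_Icc_self hx)))
  have huzero : EqOn u 0 (Ioo b₀ b₁) :=
    timoshenko_eqOn_zero_of_eqOn_zero isOpen_Ioo hK.ne' hρ.ne' hω hvzero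
      (fun x hx => heq1 x (hsub hx)) (fun x hx => heq2' x (hsub hx))
  exact fun x hx => ⟨huzero hx, hvzero hx⟩

/-- System (2.6): an eigenvector of the damped Timoshenko operator associated with
a purely imaginary eigenvalue vanishes on the damped subinterval `(b₀, b₁)`. -/
theorem stmt_3 (ρ K Iρ E I l ω : ℝ)
    (hρ : 0 < ρ) (hK : 0 < K) (hIρ : 0 < Iρ) (hE : 0 < E) (hI : 0 < I) (hl : 0 < l)
    (hω : ω ≠ 0)
    (b : ℝ → ℝ) (hb : ContinuousOn b (Set.Icc 0 l))
    (hbnonneg : ∀ x ∈ Set.Icc (0 : ℝ) l, 0 ≤ b x)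
    (b₀ b₁ bbar : ℝ) (hb₀ : 0 ≤ b₀) (hb₀₁ : b₀ < b₁) (hb₁ : b₁ ≤ l) (hbbar : 0 < bbar)
    (hblower : ∀ x ∈ Set.Icc b₀ b₁, bbar ≤ b x)
    (u v : ℝ → ℂ)
    (hu : ContDiffOn ℝ 2 u (Set.Icc 0 l))
    (hv : ContDiffOn ℝ 2 v (Set.Icc 0 l))
    (hu0 : u 0 = 0) (hul : u l = 0) (hv0 : v 0 = 0) (hvl : v l = 0)
    (heq1 : ∀ x ∈ Set.Ioo (0 : ℝ) l,
      (K : ℂ) * deriv (deriv u) x - (K : ℂ) * deriv v x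
        = -((ρ : ℂ) * (ω : ℂ) ^ 2) * u x)
    (heq2 : ∀ x ∈ Set.Ioo (0 : ℝ) l,
      (E : ℂ) * (I : ℂ) * deriv (deriv v) x + (K : ℂ) * deriv u x - (K : ℂ) * v x
        - Complex.I * (b x : ℂ) * (ω : ℂ) * v x
        = -((Iρ : ℂ) * (ω : ℂ) ^ 2) * v x) :
    ∀ x ∈ Set.Ioo b₀ b₁, u x = 0 ∧ v x = 0 :=
  stmt_3_general ρ K Iρ E I l ω hρ hK hω b hbnonneg b₀ b₁ bbar hb₀ hb₁ hbbar hblower u v hu hv hu0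
    hul hv0 hvl heq1 heq2
end

section
/- Let α, β, γ > 0 and l > 0 be real numbers. Set Δ = √((α² − β²)² + 4α²γ²), X₋ = −(α² + β² + Δ)/2 and X₊ = 2α²(γ² − β²)/(α² + β² + Δ). Let u : [0,l] → ℝ be four times continuously differentiable and satisfy u'''' + (α² + β²)·u'' + α²·(β² − γ²)·u = 0 on (0,l). Then there exist real constants A₁, A₂, A₃, A₄ such that for all x ∈be (0,l): u(x) = A₁·cos(√|X₋|·x) + A₂·sin(√|X₋|·x) + w(x), where w(x) = A₃·exp(√(X₊)·x) + A₄·exp(−√(X₊)·x) if γ² > β², w(x) = A₃·cos(√|X₊|·x) + A₄·sin(√|X₊|·x) if γ² < β², and w(x) = A₃·x + A₄ if γ² = β². -/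
/-!
Writing `X₋ + X₊ = -(α² + β²)` and `X₋ X₊ = α² (β² - γ²)`, the equation factors as
`(D² - X₋)(D² - X₊) u = 0`. Since `Δ = X₊ - X₋ > 0`, the functions `(X₊ u - u'') / Δ`
and `(u'' - X₋ u) / Δ` add up to `u` and solve `f'' = X₋ f` and `f'' = X₊ f` respectively. Each
equation `f'' = c f` is then solved on the interval by exhibiting two first integrals, i.e.
combinations of `f` and `f'` with vanishing derivative.
-/

open Real Set

theorem IsOpen.exists_eq_const_of_hasDerivAt_zero {s : Set ℝ} (hs : IsOpen s)
    (hs' : IsPreconnected s) {f : ℝ → ℝ} (hf : ∀ x ∈ s, HasDerivAt f 0 x) :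
    ∃ a, ∀ x ∈ s, f x = a :=
  hs.exists_is_const_of_deriv_eq_zero hs'
    (fun x hx => (hf x hx).differentiableAt.differentiableWithinAt) (fun x hx => (hf x hx).deriv)

theorem ContDiffOn.hasDerivAt_iteratedDeriv {𝕜 F : Type*} [NontriviallyNormedField 𝕜]
    [NormedAddCommGroup F] [NormedSpace 𝕜 F] {f : 𝕜 → F} {s : Set 𝕜} {n : WithTop ℕ∞}
    {k : ℕ} (hf : ContDiffOn 𝕜 n f s) (hs : IsOpen s) (hk : k < n) {x : 𝕜} (hx : x ∈ s) :
    HasDerivAt (iteratedDeriv k f) (iteratedDeriv (k + 1) f x) x := by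
  have hd : DifferentiableOn 𝕜 (iteratedDeriv k f) s :=
    (hf.differentiableOn_iteratedDerivWithin hk hs.uniqueDiffOn).congr
      fun y hy => (iteratedDerivWithin_of_isOpen hs hy).symm
  rw [iteratedDeriv_succ]
  exact (hd.differentiableAt (hs.mem_nhds hx)).hasDerivAt

def SecondDerivEqMulOn (c : ℝ) (s : Set ℝ) (f : ℝ → ℝ) : Prop :=
  ∃ f' : ℝ → ℝ, ∀ x ∈ s, HasDerivAt f (f' x) x ∧ HasDerivAt f' (c * f x) x

namespace SecondDerivEqMulOn

variable {c : ℝ} {s : Set ℝ} {f : ℝ → ℝ}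

theorem exists_eq_linear (hf : SecondDerivEqMulOn 0 s f) (hs : IsOpen s)
    (hs' : IsPreconnected s) : ∃ A B, ∀ x ∈ s, f x = A * x + B := by
  obtain ⟨f', hf'⟩ := hf
  obtain ⟨A, hA⟩ := hs.exists_eq_const_of_hasDerivAt_zero hs' fun x hx => by
    simpa using (hf' x hx).2
  obtain ⟨B, hB⟩ := hs.exists_eq_const_of_hasDerivAt_zero hs' (f := fun y => f y - A * y)
    fun x hx => by
      simpa [hA x hx] using (hf' x hx).1.fun_sub ((hasDerivAt_id x).const_mul A)
  exact ⟨A, B, fun x hx => by linarith [hB x hx]⟩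

theorem exists_eq_exp (hf : SecondDerivEqMulOn c s f) (hs : IsOpen s) (hs' : IsPreconnected s)
    (hc : 0 < c) :
    ∃ A B, ∀ x ∈ s, f x = A * exp (√c * x) + B * exp (-(√c * x)) := by
  obtain ⟨f', hf'⟩ := hf
  set k := √c
  have hk : 0 < k := sqrt_pos.mpr hc
  have hkc : k ^ 2 = c := sq_sqrt hc.le
  have hlin : ∀ x, HasDerivAt (fun y => k * y) k x := fun x => by
    simpa using (hasDerivAt_id x).const_mul k
  -- `(f' ± k f) e^{∓kx}` are first integrals
  obtain ⟨P, hP⟩ := hs.exists_eq_const_of_hasDerivAt_zero hs'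
    (f := fun y => (f' y + k * f y) * exp (-(k * y))) fun x hx => by
      refine (((hf' x hx).2.fun_add ((hf' x hx).1.const_mul k)).fun_mul
        (hlin x).fun_neg.exp).congr_deriv ?_
      rw [← hkc]; ring
  obtain ⟨Q, hQ⟩ := hs.exists_eq_const_of_hasDerivAt_zero hs'
    (f := fun y => (f' y - k * f y) * exp (k * y)) fun x hx => by
      refine (((hf' x hx).2.fun_sub ((hf' x hx).1.const_mul k)).fun_mul
        (hlin x).exp).congr_deriv ?_
      rw [← hkc]; ring
  refine ⟨P / (2 * k), -Q / (2 * k), fun x hx => ?_⟩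
  have hPx : f' x + k * f x = P * exp (k * x) := by
    rw [← hP x hx, mul_assoc, ← exp_add, neg_add_cancel, exp_zero, mul_one]
  have hQx : f' x - k * f x = Q * exp (-(k * x)) := by
    rw [← hQ x hx, mul_assoc, ← exp_add, add_neg_cancel, exp_zero, mul_one]
  field_simp
  linear_combination hPx - hQx

theorem exists_eq_cos_sin (hf : SecondDerivEqMulOn c s f) (hs : IsOpen s)
    (hs' : IsPreconnected s) (hc : c < 0) :
    ∃ A B, ∀ x ∈ s, f x = A * cos (√|c| * x) + B * sin (√|c| * x) := by
  obtain ⟨f', hf'⟩ := hf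
  set ω := √|c|
  have hω : 0 < ω := sqrt_pos.mpr (abs_pos.mpr hc.ne)
  have hωc : ω ^ 2 = -c := by rw [sq_sqrt (abs_nonneg c), abs_of_neg hc]
  have hlin : ∀ x, HasDerivAt (fun y => ω * y) ω x := fun x => by
    simpa using (hasDerivAt_id x).const_mul ω
  -- Wronskians of `f` with `sin (ω x)` and `cos (ω x)` are first integrals
  obtain ⟨P, hP⟩ := hs.exists_eq_const_of_hasDerivAt_zero hs'
    (f := fun y => f' y * cos (ω * y) + ω * f y * sin (ω * y)) fun x hx => by
      refine (((hf' x hx).2.fun_mul (hlin x).cos).fun_add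
        ((((hf' x hx).1.const_mul ω).fun_mul (hlin x).sin))).congr_deriv ?_
      linear_combination f x * cos (ω * x) * hωc
  obtain ⟨Q, hQ⟩ := hs.exists_eq_const_of_hasDerivAt_zero hs'
    (f := fun y => f' y * sin (ω * y) - ω * f y * cos (ω * y)) fun x hx => by
      refine (((hf' x hx).2.fun_mul (hlin x).sin).fun_sub
        ((((hf' x hx).1.const_mul ω).fun_mul (hlin x).cos))).congr_deriv ?_
      linear_combination f x * sin (ω * x) * hωc
  refine ⟨-Q / ω, P / ω, fun x hx => ?_⟩
  field_simp
  linear_combination sin (ω * x) * hP x hx - cos (ω * x) * hQ x hx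
    - ω * f x * sin_sq_add_cos_sq (ω * x)

end SecondDerivEqMulOn

theorem exists_add_secondDerivEqMulOn_of_iteratedDeriv_four {s : Set ℝ} (hs : IsOpen s)
    {u : ℝ → ℝ} (hu : ContDiffOn ℝ 4 u s) {a b : ℝ} (hab : a ≠ b)
    (hode : ∀ x ∈ s,
      iteratedDeriv 4 u x - (a + b) * iteratedDeriv 2 u x + a * b * u x = 0) :
    ∃ h w, SecondDerivEqMulOn a s h ∧ SecondDerivEqMulOn b s w ∧
      ∀ x ∈ s, u x = h x + w x := by
  have hba : b - a ≠ 0 := sub_ne_zero.mpr hab.symm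
  have hd : ∀ k < 4, ∀ x ∈ s,
      HasDerivAt (iteratedDeriv k u) (iteratedDeriv (k + 1) u x) x := fun k hk x hx =>
    hu.hasDerivAt_iteratedDeriv hs (by exact_mod_cast hk) hx
  have hd0 : ∀ x ∈ s, HasDerivAt u (iteratedDeriv 1 u x) x := fun x hx => by
    simpa using hd 0 (by norm_num) x hx
  refine ⟨fun y => (b * u y - iteratedDeriv 2 u y) / (b - a),
    fun y => (iteratedDeriv 2 u y - a * u y) / (b - a),
    ⟨fun y => (b * iteratedDeriv 1 u y - iteratedDeriv 3 u y) / (b - a),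
      fun x hx => ⟨?_, ?_⟩⟩,
    ⟨fun y => (iteratedDeriv 3 u y - a * iteratedDeriv 1 u y) / (b - a),
      fun x hx => ⟨?_, ?_⟩⟩,
    fun x _ => by field_simp; ring⟩
  · exact (((hd0 x hx).const_mul b).fun_sub (hd 2 (by norm_num) x hx)).div_const _
  · refine (((hd 1 (by norm_num) x hx).const_mul b).fun_sub
      (hd 3 (by norm_num) x hx)).div_const _ |>.congr_deriv ?_
    rw [mul_div_assoc']
    congr 1
    linear_combination -hode x hx
  · exact ((hd 2 (by norm_num) x hx).fun_sub ((hd0 x hx).const_mul a)).div_const _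
  · refine ((hd 3 (by norm_num) x hx).fun_sub
      ((hd 1 (by norm_num) x hx).const_mul a)).div_const _ |>.congr_deriv ?_
    rw [mul_div_assoc']
    congr 1
    linear_combination hode x hx

theorem stmt_8_general (α β γ l Δ Xm Xp : ℝ)
    (hα : 0 < α) (hγ : 0 < γ)
    (hΔ : Δ = Real.sqrt ((α ^ 2 - β ^ 2) ^ 2 + 4 * α ^ 2 * γ ^ 2))
    (hXm : Xm = -(α ^ 2 + β ^ 2 + Δ) / 2)
    (hXp : Xp = 2 * α ^ 2 * (γ ^ 2 - β ^ 2) / (α ^ 2 + β ^ 2 + Δ))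
    (u : ℝ → ℝ)
    (hu : ContDiffOn ℝ 4 u (Set.Icc 0 l))
    (hode : ∀ x ∈ Set.Ioo (0 : ℝ) l,
      iteratedDeriv 4 u x + (α ^ 2 + β ^ 2) * iteratedDeriv 2 u x
        + α ^ 2 * (β ^ 2 - γ ^ 2) * u x = 0) :
    ∃ A₁ A₂ A₃ A₄ : ℝ,
      (β ^ 2 < γ ^ 2 → ∀ x ∈ Set.Ioo (0 : ℝ) l,
        u x = A₁ * Real.cos (Real.sqrt |Xm| * x) + A₂ * Real.sin (Real.sqrt |Xm| * x)
          + A₃ * Real.exp (Real.sqrt Xp * x) + A₄ * Real.exp (-(Real.sqrt Xp * x))) ∧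
      (γ ^ 2 < β ^ 2 → ∀ x ∈ Set.Ioo (0 : ℝ) l,
        u x = A₁ * Real.cos (Real.sqrt |Xm| * x) + A₂ * Real.sin (Real.sqrt |Xm| * x)
          + A₃ * Real.cos (Real.sqrt |Xp| * x) + A₄ * Real.sin (Real.sqrt |Xp| * x)) ∧
      (γ ^ 2 = β ^ 2 → ∀ x ∈ Set.Ioo (0 : ℝ) l,
        u x = A₁ * Real.cos (Real.sqrt |Xm| * x) + A₂ * Real.sin (Real.sqrt |Xm| * x)
          + A₃ * x + A₄) := by
  have hΔsq : Δ ^ 2 = (α ^ 2 - β ^ 2) ^ 2 + 4 * α ^ 2 * γ ^ 2 := by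
    rw [hΔ]; exact sq_sqrt (by positivity)
  have hΔpos : 0 < Δ := by rw [hΔ]; positivity
  have hden : 0 < α ^ 2 + β ^ 2 + Δ := by positivity
  have hsum : Xm + Xp = -(α ^ 2 + β ^ 2) := by
    rw [hXm, hXp]; field_simp; linear_combination -hΔsq
  have hprod : Xm * Xp = α ^ 2 * (β ^ 2 - γ ^ 2) := by
    rw [hXm, hXp]; field_simp; ring
  have hXm_neg : Xm < 0 := by rw [hXm]; linarith
  have hXm_lt : Xm < Xp := by linarith
  obtain ⟨h, w, hh, hw, huhw⟩ := exists_add_secondDerivEqMulOn_of_iteratedDeriv_four isOpen_Ioo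
    (hu.mono Ioo_subset_Icc_self) hXm_lt.ne fun x hx => by
      linear_combination hode x hx - iteratedDeriv 2 u x * hsum + u x * hprod
  obtain ⟨A₁, A₂, hA⟩ := hh.exists_eq_cos_sin isOpen_Ioo isPreconnected_Ioo hXm_neg
  rcases lt_trichotomy (β ^ 2) (γ ^ 2) with hβγ | hβγ | hβγ
  · have hXp_pos : 0 < Xp := by
      rw [hXp]; exact div_pos (mul_pos (by positivity) (sub_pos.mpr hβγ)) hden
    obtain ⟨A₃, A₄, hB⟩ := hw.exists_eq_exp isOpen_Ioo isPreconnected_Ioo hXp_pos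
    refine ⟨A₁, A₂, A₃, A₄, fun _ x hx => ?_, fun h => (lt_asymm hβγ h).elim,
      fun h => (hβγ.ne' h).elim⟩
    rw [huhw x hx, hA x hx, hB x hx]; ring
  · have hXp_zero : Xp = 0 := by rw [hXp, hβγ, sub_self, mul_zero, zero_div]
    obtain ⟨A₃, A₄, hB⟩ := (hXp_zero ▸ hw).exists_eq_linear isOpen_Ioo isPreconnected_Ioo
    refine ⟨A₁, A₂, A₃, A₄, fun h => (hβγ.not_lt h).elim, fun h => (hβγ.not_gt h).elim,
      fun _ x hx => ?_⟩
    rw [huhw x hx, hA x hx, hB x hx]; ring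
  · have hXp_neg : Xp < 0 := by
      rw [hXp]
      exact div_neg_of_neg_of_pos (mul_neg_of_pos_of_neg (by positivity) (sub_neg.mpr hβγ)) hden
    obtain ⟨A₃, A₄, hB⟩ := hw.exists_eq_cos_sin isOpen_Ioo isPreconnected_Ioo hXp_neg
    refine ⟨A₁, A₂, A₃, A₄, fun h => (lt_asymm hβγ h).elim, fun _ x hx => ?_,
      fun h => (hβγ.ne h).elim⟩
    rw [huhw x hx, hA x hx, hB x hx]; ring

/-- Explicit-solution part of Proposition 1: the general solution (R28) of the
constant-coefficient fourth-order equation (R26). -/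
theorem stmt_8 (α β γ l Δ Xm Xp : ℝ)
    (hα : 0 < α) (hβ : 0 < β) (hγ : 0 < γ) (hl : 0 < l)
    (hΔ : Δ = Real.sqrt ((α ^ 2 - β ^ 2) ^ 2 + 4 * α ^ 2 * γ ^ 2))
    (hXm : Xm = -(α ^ 2 + β ^ 2 + Δ) / 2)
    (hXp : Xp = 2 * α ^ 2 * (γ ^ 2 - β ^ 2) / (α ^ 2 + β ^ 2 + Δ))
    (u : ℝ → ℝ)
    (hu : ContDiffOn ℝ 4 u (Set.Icc 0 l))
    (hode : ∀ x ∈ Set.Ioo (0 : ℝ) l,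
      iteratedDeriv 4 u x + (α ^ 2 + β ^ 2) * iteratedDeriv 2 u x
        + α ^ 2 * (β ^ 2 - γ ^ 2) * u x = 0) :
    ∃ A₁ A₂ A₃ A₄ : ℝ,
      (β ^ 2 < γ ^ 2 → ∀ x ∈ Set.Ioo (0 : ℝ) l,
        u x = A₁ * Real.cos (Real.sqrt |Xm| * x) + A₂ * Real.sin (Real.sqrt |Xm| * x)
          + A₃ * Real.exp (Real.sqrt Xp * x) + A₄ * Real.exp (-(Real.sqrt Xp * x))) ∧
      (γ ^ 2 < β ^ 2 → ∀ x ∈ Set.Ioo (0 : ℝ) l,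
        u x = A₁ * Real.cos (Real.sqrt |Xm| * x) + A₂ * Real.sin (Real.sqrt |Xm| * x)
          + A₃ * Real.cos (Real.sqrt |Xp| * x) + A₄ * Real.sin (Real.sqrt |Xp| * x)) ∧
      (γ ^ 2 = β ^ 2 → ∀ x ∈ Set.Ioo (0 : ℝ) l,
        u x = A₁ * Real.cos (Real.sqrt |Xm| * x) + A₂ * Real.sin (Real.sqrt |Xm| * x)
          + A₃ * x + A₄) :=
  stmt_8_general α β γ l Δ Xm Xp hα hγ hΔ hXm hXp u hu hode
end

section
/- Let ρ, K, I_ρ, E, I > 0 and l > 0 be real numbers, let ω be a nonzero real number, and let 0 ≤ b₀ < b₁ ≤ l. Let u, v : [0,l] → ℝ be twice continuously differentiable functions satisfying on (0,l): K·u'' − K·v' = −ρ·ω²·u and E·I·v'' + K·u' − K·v = −I_ρ·ω²·v, together with u(0) = u(l) = v(0) = v(l) = 0 and u(x) = v(x) = 0 for all x ∈ (b₀,b₁). Then u(x) = 0 and v(x) = 0 for all x ∈ [0,l]. -/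
/-!
Writing the system in the state `(u, u', v, v')` turns it into a first-order linear ODE
`w' = A w` with a constant operator `A`, which is globally Lipschitz. The hypothesis that `u` and
`v` vanish on `(b₀, b₁)` makes the whole state vanish at an interior point, so by uniqueness of
solutions of Lipschitz ODEs the state vanishes on all of `(0, l)`; the boundary conditions take
care of the endpoints.
-/

open Set Filter Topology

theorem eqOn_zero_of_hasDerivAt_linear {E : Type*} [NormedAddCommGroup E] [NormedSpace ℝ E]
    (A : E →L[ℝ] E) {w : ℝ → E} {a b t₀ : ℝ} (hw : ∀ t ∈ Ioo a b, HasDerivAt w (A (w t)) t)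
    (ht₀ : t₀ ∈ Ioo a b) (hw₀ : w t₀ = 0) : EqOn w 0 (Ioo a b) :=
  ODE_solution_unique_of_mem_Ioo (v := fun _ => A) (s := fun _ => univ)
    (fun _ _ => A.lipschitz.lipschitzOnWith) ht₀ (fun t ht => ⟨hw t ht, trivial⟩)
    (fun _ _ => ⟨by simp, trivial⟩) hw₀

namespace Beam

noncomputable def state (u v : ℝ → ℝ) (t : ℝ) : ℝ × ℝ × ℝ × ℝ :=
  (u t, deriv u t, v t, deriv v t)

/-- The system `u'' = a u + v'`, `v'' = c u' + d v` in the variables of `state u v`. -/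
noncomputable def operator (a c d : ℝ) : (ℝ × ℝ × ℝ × ℝ) →L[ℝ] ℝ × ℝ × ℝ × ℝ :=
  LinearMap.toContinuousLinearMap
    { toFun := fun p => (p.2.1, a * p.1 + p.2.2.2, p.2.2.2, c * p.2.1 + d * p.2.2.1)
      map_add' := fun p q => by simp only [Prod.fst_add, Prod.snd_add, Prod.mk_add_mk]; ring_nf
      map_smul' := fun r p => by
        simp only [Prod.smul_fst, Prod.smul_snd, Prod.smul_mk, smul_eq_mul, RingHom.id_apply]
        ring_nf }

theorem hasDerivAt_state {u v : ℝ → ℝ} {a c d x : ℝ}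
    (hu : ContDiffAt ℝ 2 u x) (hv : ContDiffAt ℝ 2 v x)
    (hu'' : deriv (deriv u) x = a * u x + deriv v x)
    (hv'' : deriv (deriv v) x = c * deriv u x + d * v x) :
    HasDerivAt (state u v) (operator a c d (state u v x)) x := by
  have hasDerivAt_deriv {f : ℝ → ℝ} (hf : ContDiffAt ℝ 2 f x) :
      HasDerivAt (deriv f) (deriv (deriv f) x) x :=
    ((hf.derivWithin (m := 1) (by norm_num)).differentiableAt (by norm_num)).hasDerivAt
  have hasDerivAt_self {f : ℝ → ℝ} (hf : ContDiffAt ℝ 2 f x) : HasDerivAt f (deriv f x) x :=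
    (hf.differentiableAt (by norm_num)).hasDerivAt
  have h := (hasDerivAt_self hu).prodMk <| (hasDerivAt_deriv hu).prodMk <|
    (hasDerivAt_self hv).prodMk (hasDerivAt_deriv hv)
  rwa [hu'', hv''] at h

theorem state_eq_zero_of_eventuallyEq {u v : ℝ → ℝ} {x : ℝ} (hu : u =ᶠ[𝓝 x] 0) (hv : v =ᶠ[𝓝 x] 0) :
    state u v x = 0 := by
  simp [state, hu.eq_of_nhds, hv.eq_of_nhds, hu.deriv_eq, hv.deriv_eq]

end Beam

theorem stmt_9_general (ρ K Iρ E I l ω : ℝ)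
    (hK : 0 < K) (hE : 0 < E) (hI : 0 < I)
    (b₀ b₁ : ℝ) (hb₀ : 0 ≤ b₀) (hb₀₁ : b₀ < b₁) (hb₁ : b₁ ≤ l)
    (u v : ℝ → ℝ)
    (hu : ContDiffOn ℝ 2 u (Set.Icc 0 l))
    (hv : ContDiffOn ℝ 2 v (Set.Icc 0 l))
    (heq1 : ∀ x ∈ Set.Ioo (0 : ℝ) l,
      K * deriv (deriv u) x - K * deriv v x = -(ρ * ω ^ 2) * u x)
    (heq2 : ∀ x ∈ Set.Ioo (0 : ℝ) l,
      E * I * deriv (deriv v) x + K * deriv u x - K * v x = -(Iρ * ω ^ 2) * v x)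
    (hu0 : u 0 = 0) (hul : u l = 0) (hv0 : v 0 = 0) (hvl : v l = 0)
    (hvanish : ∀ x ∈ Set.Ioo b₀ b₁, u x = 0 ∧ v x = 0) :
    ∀ x ∈ Set.Icc (0 : ℝ) l, u x = 0 ∧ v x = 0 := by
  have hstate : ∀ x ∈ Ioo 0 l, HasDerivAt (Beam.state u v)
      (Beam.operator (-(ρ * ω ^ 2) / K) (-K / (E * I)) ((K - Iρ * ω ^ 2) / (E * I))
        (Beam.state u v x)) x := by
    intro x hx
    have hx_nhds : Icc 0 l ∈ 𝓝 x := Icc_mem_nhds hx.1 hx.2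
    refine Beam.hasDerivAt_state (hu.contDiffAt hx_nhds) (hv.contDiffAt hx_nhds) ?_ ?_
    · field_simp
      linarith [heq1 x hx]
    · field_simp
      linarith [heq2 x hx]
  have hmid : (b₀ + b₁) / 2 ∈ Ioo b₀ b₁ := ⟨by linarith, by linarith⟩
  have hzero := eqOn_zero_of_hasDerivAt_linear _ hstate
    ⟨by linarith [hmid.1], by linarith [hmid.2]⟩ <| Beam.state_eq_zero_of_eventuallyEq
      (eventuallyEq_of_mem (Ioo_mem_nhds hmid.1 hmid.2) fun x hx => (hvanish x hx).1)
      (eventuallyEq_of_mem (Ioo_mem_nhds hmid.1 hmid.2) fun x hx => (hvanish x hx).2)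
  rintro x ⟨hx0, hxl⟩
  rcases hx0.eq_or_lt with rfl | hx0
  · exact ⟨hu0, hv0⟩
  rcases hxl.eq_or_lt with rfl | hxl
  · exact ⟨hul, hvl⟩
  have hx := hzero ⟨hx0, hxl⟩
  simp only [Beam.state, Pi.zero_apply, Prod.mk_eq_zero] at hx
  exact ⟨hx.1, hx.2.2.1⟩

/-- Corollary 2: the only solution of the overdetermined undamped eigen-system (2.6)
(vanishing on a subinterval) is the zero solution. -/
theorem stmt_9 (ρ K Iρ E I l ω : ℝ)
    (hρ : 0 < ρ) (hK : 0 < K) (hIρ : 0 < Iρ) (hE : 0 < E) (hI : 0 < I) (hl : 0 < l)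
    (hω : ω ≠ 0)
    (b₀ b₁ : ℝ) (hb₀ : 0 ≤ b₀) (hb₀₁ : b₀ < b₁) (hb₁ : b₁ ≤ l)
    (u v : ℝ → ℝ)
    (hu : ContDiffOn ℝ 2 u (Set.Icc 0 l))
    (hv : ContDiffOn ℝ 2 v (Set.Icc 0 l))
    (heq1 : ∀ x ∈ Set.Ioo (0 : ℝ) l,
      K * deriv (deriv u) x - K * deriv v x = -(ρ * ω ^ 2) * u x)
    (heq2 : ∀ x ∈ Set.Ioo (0 : ℝ) l,
      E * I * deriv (deriv v) x + K * deriv u x - K * v x = -(Iρ * ω ^ 2) * v x)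
    (hu0 : u 0 = 0) (hul : u l = 0) (hv0 : v 0 = 0) (hvl : v l = 0)
    (hvanish : ∀ x ∈ Set.Ioo b₀ b₁, u x = 0 ∧ v x = 0) :
    ∀ x ∈ Set.Icc (0 : ℝ) l, u x = 0 ∧ v x = 0 :=
  stmt_9_general ρ K Iρ E I l ω hK hE hI b₀ b₁ hb₀ hb₀₁ hb₁ u v hu hv heq1 heq2 hu0 hul hv0 hvl
    hvanish
end

section
/- Let G be a complex Hilbert space, G₀ a closed linear subspace of G with inclusion map ι : G₀ → G, and let P : G → G₀ denote the orthogonal projection of G onto G₀. For a bounded linear operator T on a Banach space Y, write ‖T‖_ess = inf{‖T + K‖ : K is a compact linear operator on Y}. Then for every bounded linear operator R on G₀: limsup_{n→∞} (‖(ι ∘ R ∘ P)ⁿ‖_ess)^{1/n} = limsup_{n→∞} (‖Rⁿ‖_ess)^{1/n}, where the first essential norm is taken in the bounded operators on G and the second in the bounded operators on G₀; that is, r_e(R∘P) = r_e(R). -/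
open Filter

/-- The essential (Calkin quotient) norm of a bounded operator on a complex Banach
space: the distance to the compact operators. -/
noncomputable def essNorm {Y : Type*} [NormedAddCommGroup Y] [NormedSpace ℂ Y]
    (T : Y →L[ℂ] Y) : ℝ :=
  sInf ((fun C : Y →L[ℂ] Y => ‖T + C‖) '' {C : Y →L[ℂ] Y | IsCompactOperator (⇑C)})

/-! If `P ∘ ι = id` with `‖ι‖, ‖P‖ ≤ 1`, then `S ↦ ι S P` and `T ↦ P T ι` are both
essential-norm contractions, and the first is inverted by the second; so `ι R P` has the same
essential norms as `R`. On powers, the inner factors `P ι` cancel: `(ι R P)ⁿ = ι Rⁿ P` for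
`n ≥ 1`, so the two Hadamard sequences agree from `n = 1` on. -/

section

variable {E F : Type*} [NormedAddCommGroup E] [NormedSpace ℂ E]
  [NormedAddCommGroup F] [NormedSpace ℂ F]

lemma essNorm_le_norm_add {T C : E →L[ℂ] E} (hC : IsCompactOperator C) :
    essNorm T ≤ ‖T + C‖ :=
  csInf_le ⟨0, by rintro _ ⟨_, -, rfl⟩; positivity⟩ ⟨C, hC, rfl⟩

lemma le_essNorm {T : E →L[ℂ] E} {a : ℝ}
    (h : ∀ C : E →L[ℂ] E, IsCompactOperator C → a ≤ ‖T + C‖) : a ≤ essNorm T :=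
  le_csInf ⟨_, 0, isCompactOperator_zero, rfl⟩ (by rintro _ ⟨C, hC, rfl⟩; exact h C hC)

lemma essNorm_comp_comp_le (T : E →L[ℂ] E) {A : F →L[ℂ] E} {B : E →L[ℂ] F}
    (hA : ‖A‖ ≤ 1) (hB : ‖B‖ ≤ 1) : essNorm (B.comp (T.comp A)) ≤ essNorm T := by
  refine le_essNorm fun C hC => ?_
  have hBCA : IsCompactOperator (B.comp (C.comp A)) := (hC.comp_clm A).clm_comp B
  calc essNorm (B.comp (T.comp A))
      ≤ ‖B.comp (T.comp A) + B.comp (C.comp A)‖ := essNorm_le_norm_add hBCA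
    _ = ‖B.comp ((T + C).comp A)‖ := by simp only [ContinuousLinearMap.add_comp,
          ContinuousLinearMap.comp_add]
    _ ≤ ‖B‖ * (‖T + C‖ * ‖A‖) := by
          grw [ContinuousLinearMap.opNorm_comp_le, ContinuousLinearMap.opNorm_comp_le]
    _ ≤ 1 * (‖T + C‖ * 1) := by gcongr
    _ = ‖T + C‖ := by ring

variable {ι : E →L[ℂ] F} {P : F →L[ℂ] E}

lemma essNorm_comp_comp_eq_of_comp_eq_id (hPι : P.comp ι = .id ℂ E) (hι : ‖ι‖ ≤ 1)
    (hP : ‖P‖ ≤ 1) (S : E →L[ℂ] E) : essNorm (ι.comp (S.comp P)) = essNorm S := by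
  refine le_antisymm (essNorm_comp_comp_le S hP hι) ?_
  calc essNorm S = essNorm (P.comp ((ι.comp (S.comp P)).comp ι)) := by
        simp only [ContinuousLinearMap.comp_assoc, hPι, ContinuousLinearMap.comp_id,
          ← ContinuousLinearMap.comp_assoc P ι, ContinuousLinearMap.id_comp]
    _ ≤ essNorm (ι.comp (S.comp P)) := essNorm_comp_comp_le _ hι hP

lemma comp_comp_pow_succ_of_comp_eq_id (hPι : P.comp ι = .id ℂ E) (R : E →L[ℂ] E) (n : ℕ) :
    ι.comp (R.comp P) ^ (n + 1) = ι.comp ((R ^ (n + 1)).comp P) := by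
  induction n with
  | zero => simp only [zero_add, pow_one]
  | succ n ih =>
    rw [pow_succ, ih, pow_succ R (n + 1), ContinuousLinearMap.mul_def,
      ContinuousLinearMap.mul_def]
    simp only [ContinuousLinearMap.comp_assoc]
    rw [← ContinuousLinearMap.comp_assoc P ι, hPι, ContinuousLinearMap.id_comp]

end

lemma Submodule.orthogonalProjectionOnto_comp_subtypeL {𝕜 G : Type*} [RCLike 𝕜]
    [NormedAddCommGroup G] [InnerProductSpace 𝕜 G] (K : Submodule 𝕜 G)
    [K.HasOrthogonalProjection] : K.orthogonalProjectionOnto.comp K.subtypeL = .id 𝕜 K := by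
  ext x
  exact congrArg Subtype.val (K.orthogonalProjectionOnto_mem_subspace_eq_self x)

theorem stmt_14_general {G : Type*} [NormedAddCommGroup G] [InnerProductSpace ℂ G]
    (G₀ : Submodule ℂ G) [CompleteSpace G₀]
    (R : G₀ →L[ℂ] G₀) :
    limsup (fun n : ℕ =>
        essNorm ((G₀.subtypeL.comp (R.comp (Submodule.orthogonalProjectionOnto G₀))) ^ n)
          ^ (1 / (n : ℝ))) atTop
      = limsup (fun n : ℕ => essNorm (R ^ n) ^ (1 / (n : ℝ))) atTop := by
  have hPι := G₀.orthogonalProjectionOnto_comp_subtypeL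
  refine limsup_congr ((eventually_ge_atTop 1).mono fun n hn => ?_)
  obtain ⟨m, rfl⟩ := Nat.exists_eq_add_of_le' hn
  rw [comp_comp_pow_succ_of_comp_eq_id hPι,
    essNorm_comp_comp_eq_of_comp_eq_id hPι G₀.norm_subtypeL_le G₀.orthogonalProjectionOnto_norm_le]

/-- Proposition `UptoPi`: right composition with the orthogonal projection onto a
closed subspace `G₀` of a complex Hilbert space does not change the essential
spectral radius (Hadamard formula) of a bounded operator of `G₀`. -/
theorem stmt_14 {G : Type*} [NormedAddCommGroup G] [InnerProductSpace ℂ G]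
    [CompleteSpace G] (G₀ : Submodule ℂ G) [CompleteSpace G₀]
    (R : G₀ →L[ℂ] G₀) :
    limsup (fun n : ℕ =>
        essNorm ((G₀.subtypeL.comp (R.comp (Submodule.orthogonalProjectionOnto G₀))) ^ n)
          ^ (1 / (n : ℝ))) atTop
      = limsup (fun n : ℕ => essNorm (R ^ n) ^ (1 / (n : ℝ))) atTop :=
  stmt_14_general G₀ R
end

section
/- Let ρ, K, I_ρ, E, I > 0 and l > 0 be real numbers, let b : [0,l] → ℝ be continuous and nonnegative, and let λ ∈ ℂ. Consider continuously differentiable functions p, φ, q, ψ : [0,l] → ℂ satisfying on [0,l]: p' = −λ·√(ρ/K)·p, φ' = −√(I_ρ/(E·I))·(λ + b/(2·I_ρ))·φ, q' = λ·√(ρ/K)·q, ψ' = √(I_ρ/(E·I))·(λ + b/(2·I_ρ))·ψ, together with the boundary conditions (p+q)(0) = (p+q)(l) = 0 and (φ+ψ)(0) = (φ+ψ)(l) = 0. Then a solution (p,φ,q,ψ) not identically (0,0,0,0) exists if and only if λ belongs to the set {i·k·π·√(K/ρ)/l : k ∈ ℤ} ∪ {−(1/(2·l·I_ρ))·∫₀ˡ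 b(y) dy + i·k·π·√(E·I/I_ρ)/l : k ∈ ℤ}. -/
/-!
Every equation is a scalar linear ODE, so its solutions are multiples of `exp` of an
antiderivative of the coefficient, and the system splits into the pairs `(p, q)` and `(φ, ψ)`.
For a pair `u' = -g u`, `v' = g v` with `G' = g`, the condition `u + v = 0` at `0` gives
`v 0 = -u 0`, and at `l` it becomes `u 0 (exp (-(G l - G 0)) - exp (G l - G 0)) = 0`; so a
nontrivial solution exists iff `G l - G 0 ∈ π i ℤ`. For `(p, q)` this reads
`λ l √(ρ/K) ∈ π i ℤ`, and for `(φ, ψ)` it reads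
`√(Iρ/(E I)) (λ l + ∫₀ˡ b / (2 Iρ)) ∈ π i ℤ`.
-/

open Set Complex

theorem eq_mul_cexp_sub_of_hasDerivWithinAt {a b : ℝ} {f g G : ℝ → ℂ}
    (hG : ∀ x ∈ Icc a b, HasDerivWithinAt G (g x) (Icc a b) x)
    (hf : ∀ x ∈ Icc a b, HasDerivWithinAt f (g x * f x) (Icc a b) x) :
    ∀ x ∈ Icc a b, f x = f a * exp (G x - G a) := by
  have hderiv : ∀ x ∈ Icc a b,
      HasDerivWithinAt (fun x => f x * exp (-G x)) 0 (Icc a b) x := fun x hx =>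
    ((hf x hx).mul (hG x hx).neg.cexp).congr_deriv (by ring)
  have hconst := constant_of_has_deriv_right_zero
    (fun x hx => (hderiv x hx).continuousWithinAt) fun x hx =>
      ((hderiv x (Ico_subset_Icc_self hx)).mono (Icc_subset_Icc hx.1 le_rfl))
        |>.mono_of_mem_nhdsWithin (Icc_mem_nhdsGE_of_mem ⟨le_rfl, hx.2⟩)
  intro x hx
  calc f x = f x * exp (-G x) * exp (G x) := by
        rw [mul_assoc, ← exp_add, neg_add_cancel, exp_zero, mul_one]
    _ = f a * exp (G x - G a) := by
      rw [hconst x hx, mul_assoc, ← exp_add, neg_add_eq_sub]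

theorem ContinuousOn.hasDerivWithinAt_integral_Icc {E : Type*} [NormedAddCommGroup E]
    [NormedSpace ℝ E] [CompleteSpace E] {a b x : ℝ} {f : ℝ → E}
    (hf : ContinuousOn f (Icc a b)) (hx : x ∈ Icc a b) :
    HasDerivWithinAt (fun u => ∫ y in a..u, f y) (f x) (Icc a b) x := by
  have : Fact (x ∈ Icc a b) := ⟨hx⟩
  refine intervalIntegral.integral_hasDerivWithinAt_right ?_
    (hf.stronglyMeasurableAtFilter_nhdsWithin measurableSet_Icc x) (hf x hx)
  exact (hf.mono (Icc_subset_Icc le_rfl hx.2)).intervalIntegrable_of_Icc hx.1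

def HasNontrivialPairSolution (g h : ℝ → ℂ) (a b : ℝ) : Prop :=
  ∃ u v : ℝ → ℂ, (∀ x ∈ Icc a b, HasDerivWithinAt u (g x * u x) (Icc a b) x) ∧
    (∀ x ∈ Icc a b, HasDerivWithinAt v (h x * v x) (Icc a b) x) ∧
    u a + v a = 0 ∧ u b + v b = 0 ∧ ¬∀ x ∈ Icc a b, u x = 0 ∧ v x = 0

theorem exists_nontrivial_solution_iff_or {a b : ℝ} (g₁ g₂ h₁ h₂ : ℝ → ℂ) :
    (∃ p φ q ψ : ℝ → ℂ,
      (∀ x ∈ Icc a b, HasDerivWithinAt p (g₁ x * p x) (Icc a b) x) ∧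
      (∀ x ∈ Icc a b, HasDerivWithinAt φ (g₂ x * φ x) (Icc a b) x) ∧
      (∀ x ∈ Icc a b, HasDerivWithinAt q (h₁ x * q x) (Icc a b) x) ∧
      (∀ x ∈ Icc a b, HasDerivWithinAt ψ (h₂ x * ψ x) (Icc a b) x) ∧
      p a + q a = 0 ∧ p b + q b = 0 ∧ φ a + ψ a = 0 ∧ φ b + ψ b = 0 ∧
      ¬∀ x ∈ Icc a b, p x = 0 ∧ φ x = 0 ∧ q x = 0 ∧ ψ x = 0) ↔
    HasNontrivialPairSolution g₁ h₁ a b ∨ HasNontrivialPairSolution g₂ h₂ a b := by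
  have hzero (g : ℝ → ℂ) (x : ℝ) : HasDerivWithinAt (fun _ => 0) (g x * 0) (Icc a b) x :=
    (hasDerivWithinAt_const x (Icc a b) 0).congr_deriv (mul_zero _).symm
  constructor
  · rintro ⟨p, φ, q, ψ, hp, hφ, hq, hψ, hpqa, hpqb, hφψa, hφψb, hne⟩
    by_cases hpq : ∀ x ∈ Icc a b, p x = 0 ∧ q x = 0
    · refine .inr ⟨φ, ψ, hφ, hψ, hφψa, hφψb, fun hφψ => hne fun x hx => ?_⟩
      exact ⟨(hpq x hx).1, (hφψ x hx).1, (hpq x hx).2, (hφψ x hx).2⟩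
    · exact .inl ⟨p, q, hp, hq, hpqa, hpqb, hpq⟩
  · rintro (⟨p, q, hp, hq, ha, hb, hne⟩ | ⟨φ, ψ, hφ, hψ, ha, hb, hne⟩)
    · refine ⟨p, fun _ => 0, q, fun _ => 0, hp, fun x _ => hzero g₂ x, hq,
        fun x _ => hzero h₂ x, ha, hb, by simp, by simp, fun h => hne fun x hx => ?_⟩
      exact ⟨(h x hx).1, (h x hx).2.2.1⟩
    · refine ⟨fun _ => 0, φ, fun _ => 0, ψ, fun x _ => hzero g₁ x, hφ,
        fun x _ => hzero h₁ x, hψ, by simp, by simp, ha, hb, fun h => hne fun x hx => ?_⟩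
      exact ⟨(h x hx).2.1, (h x hx).2.2.2⟩

theorem hasNontrivialPairSolution_neg_iff {a b : ℝ} (hab : a ≤ b) {h H : ℝ → ℂ}
    (hH : ∀ x ∈ Icc a b, HasDerivWithinAt H (h x) (Icc a b) x) :
    HasNontrivialPairSolution (fun x => -h x) h a b ↔
      ∃ k : ℤ, H b - H a = k * Real.pi * I := by
  have haI : a ∈ Icc a b := left_mem_Icc.2 hab
  have hbI : b ∈ Icc a b := right_mem_Icc.2 hab
  have hexp_iff :
      exp (-(H b - H a)) = exp (H b - H a) ↔ ∃ k : ℤ, H b - H a = k * Real.pi * I := by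
    rw [exp_eq_exp_iff_exists_int]
    constructor
    · rintro ⟨n, hn⟩
      exact ⟨-n, by push_cast; linear_combination -hn / 2⟩
    · rintro ⟨k, hk⟩
      exact ⟨-k, by push_cast; linear_combination -2 * hk⟩
  rw [← hexp_iff]
  constructor
  · rintro ⟨u, v, hu, hv, ha, hb, hne⟩
    have hu_eq := eq_mul_cexp_sub_of_hasDerivWithinAt (fun x hx => (hH x hx).fun_neg) hu
    have hv_eq := eq_mul_cexp_sub_of_hasDerivWithinAt hH hv
    have hva : v a = -u a := by linear_combination ha
    have hua : u a ≠ 0 := fun hua => hne fun x hx => by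
      rw [hu_eq x hx, hv_eq x hx, hva, hua]; simp
    have hb' := hb
    rw [hu_eq b hbI, hv_eq b hbI, hva, show -H b - -H a = -(H b - H a) by ring] at hb'
    refine mul_left_cancel₀ hua ?_
    linear_combination hb'
  · intro hperiod
    refine ⟨fun x => exp (-(H x - H a)), fun x => -exp (H x - H a), fun x hx => ?_,
      fun x hx => ?_, by simp, by beta_reduce; rw [hperiod, add_neg_cancel],
      fun h => by simpa using (h a haI).1⟩
    · exact (((hH x hx).sub_const (H a)).fun_neg.cexp).congr_deriv (by ring)
    · exact (((hH x hx).sub_const (H a)).cexp.fun_neg).congr_deriv (by ring)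

theorem hasNontrivialPairSolution_transport_iff {c l : ℝ} (hc : c ≠ 0) (hl : 0 < l)
    (lam : ℂ) :
    HasNontrivialPairSolution (fun _ => -(lam * c)) (fun _ => lam * c) 0 l ↔
      ∃ k : ℤ, lam = I * ((k * Real.pi / l * c⁻¹ : ℝ) : ℂ) := by
  have hH : ∀ x ∈ Icc 0 l,
      HasDerivWithinAt (fun x : ℝ => lam * c * x) (lam * c) (Icc 0 l) x := fun x _ => by
    simpa using ((hasDerivWithinAt_id x (Icc 0 l)).ofReal_comp.const_mul (lam * c))
  rw [hasNontrivialPairSolution_neg_iff hl.le hH]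
  refine exists_congr fun k => ?_
  have hc0 : (c : ℂ) ≠ 0 := ofReal_ne_zero.2 hc
  have hl0 : (l : ℂ) ≠ 0 := ofReal_ne_zero.2 hl.ne'
  push_cast
  constructor <;> intro h
  · field_simp at h ⊢
    linear_combination h
  · rw [h]; field_simp; ring

theorem hasNontrivialPairSolution_damped_iff {c l m : ℝ} (hc : c ≠ 0) (hm : m ≠ 0)
    (hl : 0 < l) {β : ℝ → ℝ} (hβ : ContinuousOn β (Icc 0 l)) (lam : ℂ) :
    HasNontrivialPairSolution (fun x => -(c * (lam + β x / (2 * m))))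
        (fun x => c * (lam + β x / (2 * m))) 0 l ↔
      ∃ k : ℤ, lam = -((1 / (2 * l * m) * ∫ y in (0 : ℝ)..l, β y : ℝ) : ℂ)
        + I * ((k * Real.pi / l * c⁻¹ : ℝ) : ℂ) := by
  have hH : ∀ x ∈ Icc 0 l, HasDerivWithinAt
      (fun x : ℝ => c * (lam * x + ((∫ y in (0 : ℝ)..x, β y : ℝ) : ℂ) / (2 * m)))
      (c * (lam + β x / (2 * m))) (Icc 0 l) x := fun x hx => by
    have hB := (hβ.hasDerivWithinAt_integral_Icc hx).ofReal_comp
    simpa using (((hasDerivWithinAt_id x (Icc 0 l)).ofReal_comp.const_mul lam).add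
      (hB.div_const (2 * (m : ℂ)))).const_mul (c : ℂ)
  rw [hasNontrivialPairSolution_neg_iff hl.le hH]
  refine exists_congr fun k => ?_
  have hc0 : (c : ℂ) ≠ 0 := ofReal_ne_zero.2 hc
  have hl0 : (l : ℂ) ≠ 0 := ofReal_ne_zero.2 hl.ne'
  have hm0 : (m : ℂ) ≠ 0 := ofReal_ne_zero.2 hm
  rw [intervalIntegral.integral_same]
  push_cast
  constructor <;> intro h
  · field_simp at h ⊢
    linear_combination h
  · rw [h]; field_simp; ring

theorem stmt_18_general (ρ K Iρ E I l : ℝ)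
    (hρ : 0 < ρ) (hK : 0 < K) (hIρ : 0 < Iρ) (hE : 0 < E) (hI : 0 < I) (hl : 0 < l)
    (b : ℝ → ℝ) (hb : ContinuousOn b (Set.Icc 0 l))
    (lam : ℂ) :
    (∃ p φ q ψ : ℝ → ℂ,
      (∀ x ∈ Set.Icc (0 : ℝ) l,
        HasDerivWithinAt p (-lam * (Real.sqrt (ρ / K) : ℂ) * p x) (Set.Icc 0 l) x) ∧
      (∀ x ∈ Set.Icc (0 : ℝ) l,
        HasDerivWithinAt φ
          (-(Real.sqrt (Iρ / (E * I)) : ℂ) * (lam + (b x : ℂ) / (2 * (Iρ : ℂ))) * φ x)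
          (Set.Icc 0 l) x) ∧
      (∀ x ∈ Set.Icc (0 : ℝ) l,
        HasDerivWithinAt q (lam * (Real.sqrt (ρ / K) : ℂ) * q x) (Set.Icc 0 l) x) ∧
      (∀ x ∈ Set.Icc (0 : ℝ) l,
        HasDerivWithinAt ψ
          ((Real.sqrt (Iρ / (E * I)) : ℂ) * (lam + (b x : ℂ) / (2 * (Iρ : ℂ))) * ψ x)
          (Set.Icc 0 l) x) ∧
      p 0 + q 0 = 0 ∧ p l + q l = 0 ∧ φ 0 + ψ 0 = 0 ∧ φ l + ψ l = 0 ∧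
      ¬(∀ x ∈ Set.Icc (0 : ℝ) l, p x = 0 ∧ φ x = 0 ∧ q x = 0 ∧ ψ x = 0)) ↔
    ((∃ k : ℤ, lam = Complex.I * (((k : ℝ) * Real.pi / l) * Real.sqrt (K / ρ) : ℝ)) ∨
     (∃ k : ℤ, lam = -((1 / (2 * l * Iρ)) * ∫ y in (0 : ℝ)..l, b y : ℝ)
        + Complex.I * (((k : ℝ) * Real.pi / l) * Real.sqrt (E * I / Iρ) : ℝ))) := by
  have hc : Real.sqrt (ρ / K) ≠ 0 := (Real.sqrt_pos.2 (div_pos hρ hK)).ne'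
  have hd : Real.sqrt (Iρ / (E * I)) ≠ 0 :=
    (Real.sqrt_pos.2 (div_pos hIρ (mul_pos hE hI))).ne'
  refine (exists_nontrivial_solution_iff_or _ _ _ _).trans (or_congr ?_ ?_)
  · simp_rw [neg_mul lam]
    rw [hasNontrivialPairSolution_transport_iff hc hl, ← Real.sqrt_inv, inv_div]
  · simp_rw [neg_mul (Real.sqrt (Iρ / (E * I)) : ℂ)]
    rw [hasNontrivialPairSolution_damped_iff hd hIρ.ne' hl hb, ← Real.sqrt_inv, inv_div]

/-- Computation of the spectrum of the decoupled Riemann-invariant operator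
`S_{1,C₀}`: the eigenvalue problem with Dirichlet-type boundary conditions has a
nontrivial solution exactly for `λ` in the displayed set. -/
theorem stmt_18 (ρ K Iρ E I l : ℝ)
    (hρ : 0 < ρ) (hK : 0 < K) (hIρ : 0 < Iρ) (hE : 0 < E) (hI : 0 < I) (hl : 0 < l)
    (b : ℝ → ℝ) (hb : ContinuousOn b (Set.Icc 0 l))
    (hbnonneg : ∀ x ∈ Set.Icc (0 : ℝ) l, 0 ≤ b x)
    (lam : ℂ) :
    (∃ p φ q ψ : ℝ → ℂ,
      (∀ x ∈ Set.Icc (0 : ℝ) l,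
        HasDerivWithinAt p (-lam * (Real.sqrt (ρ / K) : ℂ) * p x) (Set.Icc 0 l) x) ∧
      (∀ x ∈ Set.Icc (0 : ℝ) l,
        HasDerivWithinAt φ
          (-(Real.sqrt (Iρ / (E * I)) : ℂ) * (lam + (b x : ℂ) / (2 * (Iρ : ℂ))) * φ x)
          (Set.Icc 0 l) x) ∧
      (∀ x ∈ Set.Icc (0 : ℝ) l,
        HasDerivWithinAt q (lam * (Real.sqrt (ρ / K) : ℂ) * q x) (Set.Icc 0 l) x) ∧
      (∀ x ∈ Set.Icc (0 : ℝ) l,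
        HasDerivWithinAt ψ
          ((Real.sqrt (Iρ / (E * I)) : ℂ) * (lam + (b x : ℂ) / (2 * (Iρ : ℂ))) * ψ x)
          (Set.Icc 0 l) x) ∧
      p 0 + q 0 = 0 ∧ p l + q l = 0 ∧ φ 0 + ψ 0 = 0 ∧ φ l + ψ l = 0 ∧
      ¬(∀ x ∈ Set.Icc (0 : ℝ) l, p x = 0 ∧ φ x = 0 ∧ q x = 0 ∧ ψ x = 0)) ↔
    ((∃ k : ℤ, lam = Complex.I * (((k : ℝ) * Real.pi / l) * Real.sqrt (K / ρ) : ℝ)) ∨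
     (∃ k : ℤ, lam = -((1 / (2 * l * Iρ)) * ∫ y in (0 : ℝ)..l, b y : ℝ)
        + Complex.I * (((k : ℝ) * Real.pi / l) * Real.sqrt (E * I / Iρ) : ℝ))) :=
  stmt_18_general ρ K Iρ E I l hρ hK hIρ hE hI hl b hb lam
end
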